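/- Fix positive integers M and K, positive reals rho and tau, and positive large-scale fading coefficients beta_{m,k} > 0 for m = 1,...,M and k = 1,...,K; define gamma_{m,k} = rho*tau*beta_{m,k}^2/(1 + rho*tau*beta_{m,k}). Suppose eta_1, ..., eta_K are power control coefficients with 0 < eta_k <= 1 for all k, and suppose there is a common value zeta such that for every k, zeta = rho * (sum_{m=1}^M gamma_{m,k})^2 * eta_k / ( sum_{m=1}^M gamma_{m,k} + rho * sum_{k'=1}^K eta_{k'} * sum_{m=1}^M gamma_{m,k} * beta_{m,k'} ). Then zeta < min over k of (sum_{m=1}^M gamma_{m,k})^2 / (sum_{m=1}^M gamma_{m,k}^2). -/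

import Mathlib

open Finset

/-! The channel-estimate variance `γ = aβ²/(1 + aβ)` (with `a = ρτ`) is positive and at most `β`,
so `∑ₘ γₘₖ² ≤ ∑ₘ γₘₖ βₘₖ`. Hence the interference term in user `k`'s denominator is at least
`ρ ηₖ ∑ₘ γₘₖ²`, and the noise term `∑ₘ γₘₖ > 0` makes the resulting bound on the SINR strict. -/

lemma mul_sq_div_one_add_mul_le {a b : ℝ} (ha : 0 ≤ a) (hb : 0 ≤ b) :
    a * b ^ 2 / (1 + a * b) ≤ b := by
  rw [div_le_iff₀ (by positivity)]
  nlinarith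

lemma sum_sq_le_sum_mul_of_le {ι : Type*} (s : Finset ι) {γ β : ι → ℝ}
    (hγ : ∀ i ∈ s, 0 ≤ γ i) (hγβ : ∀ i ∈ s, γ i ≤ β i) :
    ∑ i ∈ s, γ i ^ 2 ≤ ∑ i ∈ s, γ i * β i :=
  sum_le_sum fun i hi => by
    rw [sq]
    exact mul_le_mul_of_nonneg_left (hγβ i hi) (hγ i hi)

lemma mul_sq_mul_div_add_lt_sq_div {ρ η S Q I : ℝ} (hρ : 0 < ρ) (hη : 0 ≤ η)
    (hS : 0 < S) (hQ : 0 < Q) (hI : ρ * η * Q ≤ I) :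
    ρ * S ^ 2 * η / (S + I) < S ^ 2 / Q := by
  have hI₀ : 0 ≤ I := le_trans (by positivity) hI
  rw [div_lt_div_iff₀ (by positivity) hQ]
  have : ρ * η * Q < S + I := by linarith
  calc ρ * S ^ 2 * η * Q = S ^ 2 * (ρ * η * Q) := by ring
    _ < S ^ 2 * (S + I) := mul_lt_mul_of_pos_left this (by positivity)

/-- In cell-free Massive MIMO with maximum-ratio decoding, if a power
control `η` with `0 < η k ≤ 1` achieves a common SINR value `ζ` for all `K` users,
then `ζ < min_k (∑ m, γ m k)² / (∑ m, (γ m k)²)`. -/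
theorem stmt_7 (M K : ℕ) (hM : 0 < M) (hK : 0 < K)
    (ρ τ : ℝ) (hρ : 0 < ρ) (hτ : 0 < τ)
    (β : Fin M → Fin K → ℝ) (hβ : ∀ m k, 0 < β m k)
    (γ : Fin M → Fin K → ℝ)
    (hγ : ∀ m k, γ m k = ρ * τ * (β m k) ^ 2 / (1 + ρ * τ * β m k))
    (η : Fin K → ℝ) (hη : ∀ k, 0 < η k ∧ η k ≤ 1)
    (ζ : ℝ)
    (hζ : ∀ k, ζ = ρ * (∑ m, γ m k) ^ 2 * η k /
      (∑ m, γ m k + ρ * ∑ k', η k' * ∑ m, γ m k * β m k')) :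
    ζ < Finset.univ.inf' ⟨⟨0, hK⟩, Finset.mem_univ _⟩
      (fun k => (∑ m, γ m k) ^ 2 / ∑ m, (γ m k) ^ 2) := by
  have hM' : (univ : Finset (Fin M)).Nonempty := ⟨⟨0, hM⟩, mem_univ _⟩
  have hγ_pos m k : 0 < γ m k := by
    have := hβ m k
    rw [hγ]
    positivity
  have hγ_le m k : γ m k ≤ β m k :=
    hγ m k ▸ mul_sq_div_one_add_mul_le (by positivity) (hβ m k).le
  refine (lt_inf'_iff _).2 fun k _ => ?_
  have hS : 0 < ∑ m, γ m k := sum_pos (fun m _ => hγ_pos m k) hM'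
  have hQ : 0 < ∑ m, γ m k ^ 2 := sum_pos (fun m _ => pow_pos (hγ_pos m k) 2) hM'
  have hI : η k * ∑ m, γ m k ^ 2 ≤ ∑ k', η k' * ∑ m, γ m k * β m k' :=
    calc η k * ∑ m, γ m k ^ 2
        ≤ η k * ∑ m, γ m k * β m k :=
          mul_le_mul_of_nonneg_left (sum_sq_le_sum_mul_of_le _ (fun m _ => (hγ_pos m k).le)
            fun m _ => hγ_le m k) (hη k).1.le
      _ ≤ ∑ k', η k' * ∑ m, γ m k * β m k' :=
          single_le_sum (f := fun k' => η k' * ∑ m, γ m k * β m k')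
            (fun k' _ => mul_nonneg (hη k').1.le
              (sum_nonneg fun m _ => mul_nonneg (hγ_pos m k).le (hβ m k').le)) (mem_univ k)
  rw [hζ k]
  exact mul_sq_mul_div_add_lt_sq_div hρ (hη k).1.le hS hQ
    (mul_assoc ρ (η k) _ ▸ mul_le_mul_of_nonneg_left hI hρ.le)
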